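/- Fix h > 0 and, for sufficiently small ε > 0, let (α₋₂(ε), α₋₁(ε), α₀(ε), β₋₁(ε), γ(ε)) denote the unique solution of the 5×5 collocation system M(ε)·w = b(ε) of the sixth-order Gaussian RBF-HFD formula for the first derivative. Then (α₋₂(ε) + 1/(36h))/ε² → −h/9 as ε → 0⁺. -/

import Mathlib

open Filter Topology Matrix

/-- Collocation matrix of the sixth-order Gaussian RBF-HFD formula for the
first derivative on the uniform five-point stencil. -/
noncomputable def hfd6Matrix (h ε : ℝ) : Matrix (Fin 5) (Fin 5) ℝ :=
  !![1 - Real.exp (-16 * ε ^ 2 * h ^ 2),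
     Real.exp (-ε ^ 2 * h ^ 2) - Real.exp (-9 * ε ^ 2 * h ^ 2),
     Real.exp (-4 * ε ^ 2 * h ^ 2),
     -2 * h * ε ^ 2 * Real.exp (-ε ^ 2 * h ^ 2) -
       6 * h * ε ^ 2 * Real.exp (-9 * ε ^ 2 * h ^ 2), 1;
     Real.exp (-ε ^ 2 * h ^ 2) - Real.exp (-9 * ε ^ 2 * h ^ 2),
     1 - Real.exp (-4 * ε ^ 2 * h ^ 2),
     Real.exp (-ε ^ 2 * h ^ 2),
     -4 * h * ε ^ 2 * Real.exp (-4 * ε ^ 2 * h ^ 2), 1;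
     0, 0, 1, 0, 1;
     -2 * h * ε ^ 2 * Real.exp (-ε ^ 2 * h ^ 2) -
       6 * h * ε ^ 2 * Real.exp (-9 * ε ^ 2 * h ^ 2),
     -4 * h * ε ^ 2 * Real.exp (-4 * ε ^ 2 * h ^ 2),
     2 * h * ε ^ 2 * Real.exp (-ε ^ 2 * h ^ 2),
     2 * ε ^ 2 + Real.exp (-4 * ε ^ 2 * h ^ 2) * (2 * ε ^ 2 - 16 * ε ^ 4 * h ^ 2), 0;
     0, 0, 1, 0, 0]

/-- Right-hand side of the collocation system of the sixth-order Gaussian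
RBF-HFD formula for the first derivative. -/
noncomputable def hfd6Rhs (h ε : ℝ) : Fin 5 → ℝ :=
  ![-4 * h * ε ^ 2 * Real.exp (-4 * ε ^ 2 * h ^ 2),
    -2 * h * ε ^ 2 * Real.exp (-ε ^ 2 * h ^ 2),
    0,
    Real.exp (-ε ^ 2 * h ^ 2) * (2 * ε ^ 2 - 4 * ε ^ 4 * h ^ 2),
    0]

/-!
Rows 3 and 5 of the system force `α₀ = γ = 0`. In the variables `s = ε²h²`, `x = e^{-s}` and
`u = hα₋₂`, `v = hα₋₁`, `t = β₋₁` what remains is a `3 × 3` system, and Cramer's rule for it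
reads `D(s) (36u + 1 + 4s) = C(s)`, where `D = hfd6Det` and `C = hfd6Defect` are polynomials
in `s` and `e^{-2s}`.
Because of the flat limit both vanish to high order at `s = 0`: replacing every `e^{-2ks}` by a
Taylor polynomial with an `O(sⁿ)` error shows `D(s) ~ (18432/5) s⁸` and `C(s) = o(s⁹)`.
Hence `(u + 1/36)/s = C/(36 s D) - 1/9 → -1/9`.
-/

open Real Asymptotics
open scoped Nat

noncomputable def expTaylor (n : ℕ) (x : ℝ) : ℝ := ∑ i ∈ Finset.range n, x ^ i / i !

theorem exp_mul_sub_expTaylor_isBigO (n : ℕ) (c : ℝ) :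
    (fun s => exp (c * s) - expTaylor n (c * s)) =O[𝓝 0] (· ^ n) := by
  have hcs : Tendsto (fun s : ℝ => c * s) (𝓝 0) (𝓝 0) := by
    simpa using (continuous_const_mul c).tendsto 0
  refine ((exp_sub_sum_range_isBigO_pow n).comp_tendsto hcs).trans ?_
  simp only [Function.comp_def, mul_pow]
  exact isBigO_const_mul_self _ _ _

noncomputable def expPoly {N : ℕ} (p : Fin N → ℝ → ℝ) (c s : ℝ) : ℝ :=
  ∑ k, p k s * exp (c * s) ^ (k : ℕ)

noncomputable def expPolyTaylor {N : ℕ} (n : ℕ) (p : Fin N → ℝ → ℝ) (c s : ℝ) : ℝ :=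
  ∑ k, p k s * expTaylor n (k * (c * s))

theorem expPoly_sub_expPolyTaylor_isBigO {N : ℕ} (n : ℕ) {p : Fin N → ℝ → ℝ}
    (hp : ∀ k, ContinuousAt (p k) 0) (c : ℝ) :
    (fun s => expPoly p c s - expPolyTaylor n p c s) =O[𝓝 0] (· ^ n) := by
  have hterm (k : Fin N) : (fun s => p k s * (exp (k * c * s) - expTaylor n (k * c * s)))
      =O[𝓝 0] (· ^ n) := by
    simpa using (hp k).tendsto.isBigO_one ℝ |>.mul (exp_mul_sub_expTaylor_isBigO n (k * c))
  refine (IsBigO.fun_sum (s := Finset.univ) fun k _ => hterm k).congr_left fun s => ?_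
  simp only [expPoly, expPolyTaylor, ← Finset.sum_sub_distrib, ← exp_nat_mul, mul_assoc, mul_sub]

theorem tendsto_expPoly_div_pow {N m n : ℕ} (hmn : m < n) {p : Fin N → ℝ → ℝ}
    (hp : ∀ k, ContinuousAt (p k) 0) (c : ℝ) {q : ℝ → ℝ} (hq : ContinuousAt q 0)
    (hmodel : ∀ s, expPolyTaylor n p c s = s ^ m * q s) :
    Tendsto (fun s => expPoly p c s / s ^ m) (𝓝[≠] 0) (𝓝 (q 0)) := by
  have hrem := ((expPoly_sub_expPolyTaylor_isBigO n hp c).trans_isLittleO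
    (isLittleO_pow_pow hmn)).tendsto_div_nhds_zero
  have hlim : Tendsto (fun s => (expPoly p c s - expPolyTaylor n p c s) / s ^ m + q s)
      (𝓝[≠] 0) (𝓝 (q 0)) := by
    simpa using (hrem.add hq.tendsto).mono_left nhdsWithin_le_nhds
  refine hlim.congr' ?_
  filter_upwards [self_mem_nhdsWithin] with s hs
  rw [hmodel, sub_div, mul_div_cancel_left₀ _ (pow_ne_zero m hs), sub_add_cancel]

noncomputable def hfd6DetCoeff : Fin 13 → ℝ → ℝ :=
  ![fun _ => 1, fun s => -1 - 2 * s, fun s => -8 * s, fun s => -1 + 18 * s, fun _ => -1,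
    fun s => 2 - 12 * s, fun _ => 0, fun s => 2 + 12 * s, fun _ => -1, fun s => -1 - 18 * s,
    fun s => 8 * s, fun s => -1 + 2 * s, fun _ => 1]

noncomputable def hfd6DefectCoeff : Fin 13 → ℝ → ℝ :=
  ![fun s => 1 + 4 * s, fun s => -1 + 138 * s - 152 * s ^ 2, fun s => -152 * s - 32 * s ^ 2,
    fun s => -1 - 130 * s - 360 * s ^ 2, fun s => -1 - 4 * s + 1152 * s ^ 2,
    fun s => 2 + 140 * s - 480 * s ^ 2, fun s => 144 * s, fun s => 2 - 124 * s - 96 * s ^ 2,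
    fun s => -1 - 4 * s, fun s => -1 - 22 * s - 72 * s ^ 2, fun s => 8 * s + 32 * s ^ 2,
    fun s => -1 - 2 * s + 8 * s ^ 2, fun s => 1 + 4 * s]

noncomputable def hfd6Det (s : ℝ) : ℝ := expPoly hfd6DetCoeff (-2) s

noncomputable def hfd6Defect (s : ℝ) : ℝ := expPoly hfd6DefectCoeff (-2) s

def Hfd6ReducedSystem (s x u v t : ℝ) : Prop :=
  (1 - x ^ 16) * u + (x - x ^ 9) * v - 2 * s * (x + 3 * x ^ 9) * t = -4 * s * x ^ 4 ∧
  (x - x ^ 9) * u + (1 - x ^ 4) * v - 4 * s * x ^ 4 * t = -2 * s * x ∧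
  -(x + 3 * x ^ 9) * u - 2 * x ^ 4 * v + (1 + x ^ 4 * (1 - 8 * s)) * t = x * (1 - 2 * s)

theorem hfd6ReducedSystem_of_mulVec_eq {h ε : ℝ} (hε : ε ≠ 0) {w : Fin 5 → ℝ}
    (hw : hfd6Matrix h ε *ᵥ w = hfd6Rhs h ε) :
    Hfd6ReducedSystem (ε ^ 2 * h ^ 2) (exp (-(ε ^ 2 * h ^ 2))) (h * w 0) (h * w 1) (w 3) := by
  have row (i : Fin 5) := congrFun hw i
  have hw2 : w 2 = 0 := by
    simpa [hfd6Matrix, hfd6Rhs, mulVec, dotProduct, Fin.sum_univ_five] using row 4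
  have hw4 : w 4 = 0 := by
    simpa [hfd6Matrix, hfd6Rhs, mulVec, dotProduct, Fin.sum_univ_five, hw2] using row 2
  have hx (c : ℝ) (k : ℕ) (hc : c = k) :
      exp (-(c * ε ^ 2 * h ^ 2)) = exp (-(ε ^ 2 * h ^ 2)) ^ k := by
    rw [← exp_nat_mul, hc]; ring_nf
  have r0 := row 0
  have r1 := row 1
  have r3 := row 3
  simp only [mulVec, dotProduct, hfd6Matrix, hfd6Rhs, Fin.sum_univ_five, of_apply, neg_mul,
    cons_val', cons_val_fin_one, cons_val_zero, cons_val_one, cons_val, hw2, hw4, mul_zero,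
    add_zero, hx 4 4 (by norm_num), hx 9 9 (by norm_num), hx 16 16 (by norm_num)] at r0 r1 r3
  refine ⟨by linear_combination h * r0, by linear_combination h * r1, ?_⟩
  refine mul_left_cancel₀ (by positivity : 2 * ε ^ 2 ≠ 0) ?_
  linear_combination r3

theorem Hfd6ReducedSystem.hfd6Det_mul_eq {s u v t : ℝ}
    (H : Hfd6ReducedSystem s (exp (-s)) u v t) :
    hfd6Det s * (36 * u + 1 + 4 * s) = hfd6Defect s := by
  obtain ⟨e₁, e₂, e₃⟩ := H
  set x := exp (-s)
  have hx : exp (-2 * s) = x ^ 2 := by rw [← exp_nat_mul]; ring_nf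
  simp only [hfd6Det, hfd6Defect, expPoly, hfd6DetCoeff, hfd6DefectCoeff, hx, Fin.sum_univ_succ,
    Fin.sum_univ_zero, Matrix.cons_val_zero, Matrix.cons_val_succ, Fin.val_zero, Fin.val_succ]
  -- the multipliers are the cofactors of the first column
  linear_combination 36 * (((1 - x ^ 4) * (1 + x ^ 4 * (1 - 8 * s)) - 8 * s * x ^ 8) * e₁
    + (-2 * s * (x + 3 * x ^ 9) * (-2 * x ^ 4) - (x - x ^ 9) * (1 + x ^ 4 * (1 - 8 * s))) * e₂
    + ((x - x ^ 9) * (-4 * s * x ^ 4) + 2 * s * (x + 3 * x ^ 9) * (1 - x ^ 4)) * e₃)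

theorem continuousAt_hfd6DetCoeff (k : Fin 13) : ContinuousAt (hfd6DetCoeff k) 0 := by
  fin_cases k <;>
    simp only [hfd6DetCoeff, Fin.zero_eta, Fin.mk_one, Fin.reduceFinMk, cons_val_zero,
      cons_val_one, cons_val] <;> fun_prop

theorem continuousAt_hfd6DefectCoeff (k : Fin 13) : ContinuousAt (hfd6DefectCoeff k) 0 := by
  fin_cases k <;>
    simp only [hfd6DefectCoeff, Fin.zero_eta, Fin.mk_one, Fin.reduceFinMk, cons_val_zero,
      cons_val_one, cons_val] <;> fun_prop

-- Only the coefficients below the truncation order are those of `hfd6Det` and `hfd6Defect`;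
-- the top ones are artefacts of the truncation.

theorem expPolyTaylor_hfd6DetCoeff (s : ℝ) :
    expPolyTaylor 9 hfd6DetCoeff (-2) s = s ^ 8 * (18432 / 5 + 16459776 / 5 * s) := by
  simp only [expPolyTaylor, expTaylor, hfd6DetCoeff, Fin.sum_univ_succ, Fin.sum_univ_zero,
    cons_val_zero, cons_val_succ, Fin.val_zero, Fin.val_succ, Finset.sum_range_succ,
    Finset.sum_range_zero]
  norm_num [Nat.factorial]
  ring

theorem expPolyTaylor_hfd6DefectCoeff (s : ℝ) :
    expPolyTaylor 10 hfd6DefectCoeff (-2) s =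
      s ^ 9 * (s * (-2851327744 / 315 - 1640244224 / 63 * s)) := by
  simp only [expPolyTaylor, expTaylor, hfd6DefectCoeff, Fin.sum_univ_succ, Fin.sum_univ_zero,
    cons_val_zero, cons_val_succ, Fin.val_zero, Fin.val_succ, Finset.sum_range_succ,
    Finset.sum_range_zero]
  norm_num [Nat.factorial]
  ring

theorem tendsto_hfd6Det_div_pow :
    Tendsto (fun s => hfd6Det s / s ^ 8) (𝓝[≠] 0) (𝓝 (18432 / 5)) := by
  simpa [hfd6Det] using tendsto_expPoly_div_pow (by norm_num : 8 < 9) continuousAt_hfd6DetCoeff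
    (-2) (q := fun s => 18432 / 5 + 16459776 / 5 * s) (by fun_prop) expPolyTaylor_hfd6DetCoeff

theorem tendsto_hfd6Defect_div_pow :
    Tendsto (fun s => hfd6Defect s / s ^ 9) (𝓝[≠] 0) (𝓝 0) := by
  simpa [hfd6Defect] using tendsto_expPoly_div_pow (by norm_num : 9 < 10)
    continuousAt_hfd6DefectCoeff (-2) (q := fun s => s * (-2851327744 / 315 - 1640244224 / 63 * s))
    (by fun_prop) expPolyTaylor_hfd6DefectCoeff

theorem eventually_hfd6Det_ne_zero : ∀ᶠ s in 𝓝[≠] 0, hfd6Det s ≠ 0 :=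
  (tendsto_hfd6Det_div_pow.eventually_ne (by norm_num : (18432 / 5 : ℝ) ≠ 0)).mono
    fun s hs h0 => hs (by simp [h0])

theorem tendsto_hfd6Defect_div_mul_hfd6Det :
    Tendsto (fun s => hfd6Defect s / (s * hfd6Det s)) (𝓝[≠] 0) (𝓝 0) := by
  have h := tendsto_hfd6Defect_div_pow.div tendsto_hfd6Det_div_pow (by norm_num)
  rw [zero_div] at h
  refine h.congr' ?_
  filter_upwards [self_mem_nhdsWithin] with s (hs : s ≠ 0)
  rw [Pi.div_apply, div_div_div_eq, show s ^ 9 = s ^ 8 * s by ring, mul_assoc,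
    mul_comm (hfd6Defect s), mul_div_mul_left _ _ (pow_ne_zero 8 hs)]

theorem tendsto_of_hfd6Det_mul_eq {α : Type*} {l : Filter α} {s u : α → ℝ}
    (hs : Tendsto s l (𝓝[≠] 0))
    (hu : ∀ᶠ a in l, hfd6Det (s a) * (36 * u a + 1 + 4 * s a) = hfd6Defect (s a)) :
    Tendsto (fun a => (u a + 1 / 36) / s a) l (𝓝 (-1 / 9)) := by
  have h := ((tendsto_hfd6Defect_div_mul_hfd6Det.comp hs).div_const 36).sub_const (1 / 9)
  rw [zero_div, zero_sub, ← neg_div] at h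
  refine h.congr' ?_
  filter_upwards [hu, hs.eventually eventually_hfd6Det_ne_zero,
    hs.eventually self_mem_nhdsWithin] with a ha hD (hs : s a ≠ 0)
  simp only [Function.comp_apply, ← ha]
  field_simp
  ring

theorem gaussian_rbf_hfd6_alpha2_expansion_general (h : ℝ) (hh : 0 < h)
    (w : ℝ → Fin 5 → ℝ)
    (hw : ∀ᶠ ε in 𝓝[>] (0 : ℝ), hfd6Matrix h ε *ᵥ w ε = hfd6Rhs h ε) :
    Tendsto (fun ε : ℝ => (w ε 0 + 1 / (36 * h)) / ε ^ 2)
      (𝓝[>] 0) (𝓝 (-h / 9)) := by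
  have hs : Tendsto (fun ε : ℝ => ε ^ 2 * h ^ 2) (𝓝[>] 0) (𝓝[≠] 0) := by
    refine tendsto_nhdsWithin_iff.mpr ⟨?_, ?_⟩
    · exact ((by fun_prop : Continuous fun ε : ℝ => ε ^ 2 * h ^ 2).tendsto' 0 0
        (by simp)).mono_left nhdsWithin_le_nhds
    · filter_upwards [self_mem_nhdsWithin] with ε (hε : 0 < ε)
      exact (by positivity : ε ^ 2 * h ^ 2 ≠ 0)
  have hu : ∀ᶠ ε in 𝓝[>] 0,
      hfd6Det (ε ^ 2 * h ^ 2) * (36 * (h * w ε 0) + 1 + 4 * (ε ^ 2 * h ^ 2))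
        = hfd6Defect (ε ^ 2 * h ^ 2) := by
    filter_upwards [hw, self_mem_nhdsWithin] with ε hwε (hε : 0 < ε)
    exact (hfd6ReducedSystem_of_mulVec_eq hε.ne' hwε).hfd6Det_mul_eq
  rw [show -h / 9 = h * (-1 / 9) by ring]
  refine ((tendsto_of_hfd6Det_mul_eq hs hu).const_mul h).congr' ?_
  filter_upwards [self_mem_nhdsWithin] with ε (hε : 0 < ε)
  field_simp

/-- Taylor expansion at order ε² of the weight α₋₂ of the sixth-order
Gaussian RBF-HFD formula: `(α₋₂(ε) + 1/(36h))/ε² → −h/9` as ε → 0⁺. -/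
theorem gaussian_rbf_hfd6_alpha2_expansion (h : ℝ) (hh : 0 < h)
    (w : ℝ → Fin 5 → ℝ)
    (hinv : ∀ᶠ ε in 𝓝[>] (0 : ℝ), IsUnit (hfd6Matrix h ε))
    (hw : ∀ᶠ ε in 𝓝[>] (0 : ℝ), hfd6Matrix h ε *ᵥ w ε = hfd6Rhs h ε) :
    Tendsto (fun ε : ℝ => (w ε 0 + 1 / (36 * h)) / ε ^ 2)
      (𝓝[>] 0) (𝓝 (-h / 9)) :=
  gaussian_rbf_hfd6_alpha2_expansion_general h hh w hw
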